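/- Let U ⊆ ℝⁿ be open and connected and h : U → ℝⁿ a C² map with Dh(x) invertible for all x ∈ U. Define the cotangent lift H : U × ℝⁿ → ℝⁿ × ℝⁿ by H(x, η) = (h(x), (Dh(x)ᵀ)⁻¹ η), and let τ be the two-tensor on U × ℝⁿ whose value on tangent vectors (a, β), (a', β') at any point is τ((a,β),(a',β')) = ⟨a, β'⟩. Then H preserves τ — i.e., τ(DH(x,η)v, DH(x,η)w) = τ(v,w) for every (x,η) and all tangent vectors v,w — if and only if the second derivative of h vanishes identically, i.e., h is the restriction of an affine map. -/

import Mathlib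

open Matrix Set

attribute [local instance] Matrix.normedAddCommGroup Matrix.normedSpace

/-- The continuous linear map `u ↦ A *ᵥ u` associated to a matrix `A`. -/
noncomputable def matCLM {n : ℕ} (A : Matrix (Fin n) (Fin n) ℝ) :
    (Fin n → ℝ) →L[ℝ] (Fin n → ℝ) :=
  LinearMap.toContinuousLinearMap A.mulVecLin

/-! The first component of `DH` is `Dh`, so `τ (DH v) (DH w) = v.1 ⬝ᵥ ((DH w).2 ᵥ* Dh)`.
Differentiating the identity `(H q).2 ᵥ* Dh q.1 = q.2` expresses `(DH w).2 ᵥ* Dh` as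
`w.2 - μ ᵥ* D2h w.1` with `μ = (Dhᵀ)⁻¹ η`, so the tensor is preserved exactly when
`μ ⬝ᵥ (D2h c *ᵥ a) = 0` for all `a, c, μ` (as `η` varies, `μ` runs over all of `ℝⁿ`), i.e. when
`D2h = 0`. On a connected open set this is equivalent to `h` being affine. -/

section VecMul

variable {m n : Type*} [Fintype m] [Fintype n]

noncomputable def vecMulL : (m → ℝ) →L[ℝ] Matrix m n ℝ →L[ℝ] (n → ℝ) :=
  LinearMap.toContinuousLinearMap
    (LinearMap.toContinuousLinearMap.toLinearMap ∘ₗ Matrix.vecMulBilin ℝ ℝ)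

theorem HasFDerivAt.vecMul {X : Type*} [NormedAddCommGroup X] [NormedSpace ℝ X]
    {u : X → m → ℝ} {A : X → Matrix m n ℝ} {u' : X →L[ℝ] m → ℝ}
    {A' : X →L[ℝ] Matrix m n ℝ} {x : X} (hu : HasFDerivAt u u' x) (hA : HasFDerivAt A A' x) :
    HasFDerivAt (fun y => u y ᵥ* A y) ((vecMulL (u x)).comp A' + (vecMulL.flip (A x)).comp u') x :=
  vecMulL.hasFDerivAt_of_bilinear hu hA

end VecMul

section LinearAlgebra

variable {R m n : Type*} [CommRing R] [Fintype m] [Fintype n]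

theorem Matrix.eq_zero_iff_forall_dotProduct_mulVec [DecidableEq m] [DecidableEq n]
    (M : Matrix m n R) : M = 0 ↔ ∀ μ a, μ ⬝ᵥ (M *ᵥ a) = 0 := by
  refine ⟨fun hM μ a => by simp [hM], fun hM => Matrix.ext fun i j => ?_⟩
  simpa using hM (Pi.single i 1) (Pi.single j 1)

theorem Matrix.vecMul_inv_transpose_mulVec [DecidableEq m] {A : Matrix m m R}
    (hA : IsUnit A.det) (η : m → R) : (Aᵀ⁻¹ *ᵥ η) ᵥ* A = η := by
  rw [← mulVec_transpose, mulVec_mulVec, mul_nonsing_inv _ (isUnit_det_transpose A hA),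
    one_mulVec]

theorem Matrix.mulVec_inv_transpose_surjective [DecidableEq m] {A : Matrix m m R}
    (hA : IsUnit A.det) : Function.Surjective (Aᵀ⁻¹).mulVec :=
  fun η => ⟨η ᵥ* A, by rw [← mulVec_transpose, mulVec_mulVec,
    nonsing_inv_mul _ (isUnit_det_transpose A hA), one_mulVec]⟩

theorem Matrix.mulVec_dotProduct_eq_of_vecMul_add_eq {A B : Matrix m n R} {a c : n → R}
    {b μ : m → R} (h : b ᵥ* A + μ ᵥ* B = c) : (A *ᵥ a) ⬝ᵥ b = a ⬝ᵥ c - μ ⬝ᵥ (B *ᵥ a) := by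
  rw [← h, dotProduct_add, dotProduct_mulVec μ, dotProduct_comm a (μ ᵥ* B), add_sub_cancel_right,
    dotProduct_comm, dotProduct_mulVec, dotProduct_comm]

end LinearAlgebra

theorem ContinuousLinearMap.eq_zero_of_forall_dotProduct_mulVec_apply {E m n : Type*}
    [TopologicalSpace E] [AddCommMonoid E] [Module ℝ E] [Fintype m] [Fintype n] [DecidableEq m]
    [DecidableEq n] {B : E →L[ℝ] Matrix m n ℝ} (hB : ∀ μ c a, μ ⬝ᵥ (B c *ᵥ a) = 0) : B = 0 :=
  ContinuousLinearMap.ext fun c => (Matrix.eq_zero_iff_forall_dotProduct_mulVec _).2 (hB · c)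

theorem HasFDerivAt.fst_apply_of_fst_comp_eq {𝕜 E F G K : Type*} [NontriviallyNormedField 𝕜]
    [NormedAddCommGroup E] [NormedSpace 𝕜 E] [NormedAddCommGroup F] [NormedSpace 𝕜 F]
    [NormedAddCommGroup G] [NormedSpace 𝕜 G] [NormedAddCommGroup K] [NormedSpace 𝕜 K]
    {H : E × F → G × K} {h : E → G} {H' : E × F →L[𝕜] G × K} {h' : E →L[𝕜] G} {p : E × F}
    (hH : Prod.fst ∘ H = h ∘ Prod.fst) (hH' : HasFDerivAt H H' p) (hh : HasFDerivAt h h' p.1)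
    (v : E × F) : (H' v).1 = h' v.1 := by
  have hfst := hasFDerivAt_fst.comp p hH'
  rw [hH] at hfst
  exact congrArg (· v) (hfst.unique (hh.comp p hasFDerivAt_fst))

theorem IsOpen.exists_forall_eq_of_hasFDerivAt_zero {E F : Type*} [NormedAddCommGroup E]
    [NormedSpace ℝ E] [NormedAddCommGroup F] [NormedSpace ℝ F] {s : Set E} {f : E → F}
    (hs : IsOpen s) (hs' : IsPreconnected s)
    (hf : ∀ x ∈ s, HasFDerivAt f (0 : E →L[ℝ] F) x) : ∃ a, ∀ x ∈ s, f x = a :=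
  hs.exists_is_const_of_fderiv_eq_zero hs'
    (fun x hx => (hf x hx).differentiableAt.differentiableWithinAt) fun x hx => (hf x hx).fderiv

section CotangentLift

variable {ι : Type*} [Fintype ι] [DecidableEq ι]

open Filter Topology in
theorem cotangentLift_fderiv_snd {Dh : (ι → ℝ) → Matrix ι ι ℝ} {x η : ι → ℝ}
    (hinv : ∀ᶠ y in 𝓝 x, IsUnit (Dh y).det)
    {H : (ι → ℝ) × (ι → ℝ) → (ι → ℝ) × (ι → ℝ)} (hH : ∀ p, (H p).2 = (Dh p.1)ᵀ⁻¹ *ᵥ p.2)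
    {D2h : (ι → ℝ) →L[ℝ] Matrix ι ι ℝ} {DH : ((ι → ℝ) × (ι → ℝ)) →L[ℝ] (ι → ℝ) × (ι → ℝ)}
    (hDh : HasFDerivAt Dh D2h x) (hDH : HasFDerivAt H DH (x, η)) (v : (ι → ℝ) × (ι → ℝ)) :
    (DH v).2 ᵥ* Dh x + ((Dh x)ᵀ⁻¹ *ᵥ η) ᵥ* D2h v.1 = v.2 := by
  have hid : (fun q => (H q).2 ᵥ* Dh q.1) =ᶠ[𝓝 (x, η)] Prod.snd := by
    filter_upwards [continuousAt_fst.eventually hinv] with q hq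
    rw [hH, vecMul_inv_transpose_mulVec hq]
  have hsnd : HasFDerivAt (fun q => (H q).2) ((ContinuousLinearMap.snd ℝ _ _).comp DH) (x, η) :=
    hasFDerivAt_snd.comp (x, η) hDH
  have hfst : HasFDerivAt (fun q : (ι → ℝ) × (ι → ℝ) => Dh q.1)
      (D2h.comp (ContinuousLinearMap.fst ℝ _ _)) (x, η) :=
    hDh.comp (x, η) hasFDerivAt_fst
  have hderiv := hsnd.vecMul hfst
  have := congrArg (· v) ((hderiv.congr_of_eventuallyEq hid.symm).unique hasFDerivAt_snd)
  change (H (x, η)).2 ᵥ* D2h v.1 + (DH v).2 ᵥ* Dh x = v.2 at this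
  rwa [hH, add_comm] at this

end CotangentLift

section Affine

variable {n : ℕ}

@[simp] lemma matCLM_apply (A : Matrix (Fin n) (Fin n) ℝ) (v : Fin n → ℝ) :
    matCLM A v = A *ᵥ v := rfl

lemma matCLM_injective : Function.Injective (matCLM (n := n)) := fun _ _ hAB =>
  Matrix.ext_iff_mulVec.2 fun v => congrArg (· v) hAB

open Filter in
theorem fderiv_fderiv_eq_zero_iff_exists_affine {U : Set (Fin n → ℝ)} (hU : IsOpen U)
    (hconn : IsPreconnected U) {h : (Fin n → ℝ) → (Fin n → ℝ)}
    {Dh : (Fin n → ℝ) → Matrix (Fin n) (Fin n) ℝ}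
    {D2h : (Fin n → ℝ) → (Fin n → ℝ) →L[ℝ] Matrix (Fin n) (Fin n) ℝ}
    (hh : ∀ x ∈ U, HasFDerivAt h (matCLM (Dh x)) x) (hDh : ∀ x ∈ U, HasFDerivAt Dh (D2h x) x) :
    (∀ x ∈ U, D2h x = 0) ↔ ∃ (A : Matrix (Fin n) (Fin n) ℝ) (b : Fin n → ℝ),
      ∀ x ∈ U, h x = A *ᵥ x + b := by
  constructor
  · intro hD2h
    obtain ⟨A, hA⟩ := hU.exists_forall_eq_of_hasFDerivAt_zero hconn fun x hx =>
      hD2h x hx ▸ hDh x hx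
    obtain ⟨b, hb⟩ := hU.exists_forall_eq_of_hasFDerivAt_zero hconn (f := fun x => h x - A *ᵥ x)
      fun x hx => by
        simpa only [hA x hx, sub_self, matCLM_apply] using (hh x hx).fun_sub (matCLM A).hasFDerivAt
    exact ⟨A, b, fun x hx => by rw [← hb x hx, add_sub_cancel]⟩
  · rintro ⟨A, b, hAb⟩ x hx
    have hDhA : ∀ y ∈ U, Dh y = A := fun y hy => matCLM_injective <| (hh y hy).unique <|
      ((matCLM A).hasFDerivAt.add_const b).congr_of_eventuallyEq <|
        eventually_of_mem (hU.mem_nhds hy) hAb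
    exact (hDh x hx).unique <| (hasFDerivAt_const A x).congr_of_eventuallyEq <|
      eventually_of_mem (hU.mem_nhds hx) hDhA

end Affine

/-- Let `U ⊆ ℝⁿ` be open and connected and `h : U → ℝⁿ` a C² map (with
Jacobian `Dh` and second derivative `D2h`) such that `Dh x` is invertible for all `x ∈ U`.
Let `H` be the cotangent lift `H (x, η) = (h x, ((Dh x)ᵀ)⁻¹ η)` (with Fréchet derivative
`DH`), and let `τ` be the two-tensor `τ ((a, β), (a', β')) = ⟨a, β'⟩` on `U × ℝⁿ`.
Then `H` preserves `τ` — i.e. `τ (DH p v) (DH p w) = τ v w` at every point `p` of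
`U × ℝⁿ` and all tangent vectors `v, w` — iff the second derivative of `h` vanishes
identically, i.e. iff `h` is the restriction of an affine map. -/
theorem cotangent_lift_preserves_tensor_iff_affine {n : ℕ}
    (U : Set (Fin n → ℝ)) (hU : IsOpen U) (hconn : IsConnected U)
    (h : (Fin n → ℝ) → (Fin n → ℝ))
    (Dh : (Fin n → ℝ) → Matrix (Fin n) (Fin n) ℝ)
    (D2h : (Fin n → ℝ) → (Fin n → ℝ) →L[ℝ] Matrix (Fin n) (Fin n) ℝ)
    (hh : ∀ x ∈ U, HasFDerivAt h (matCLM (Dh x)) x)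
    (hDh : ∀ x ∈ U, HasFDerivAt Dh (D2h x) x)
    (hinv : ∀ x ∈ U, IsUnit (Dh x).det)
    (H : (Fin n → ℝ) × (Fin n → ℝ) → (Fin n → ℝ) × (Fin n → ℝ))
    (hHdef : ∀ p : (Fin n → ℝ) × (Fin n → ℝ), H p = (h p.1, ((Dh p.1)ᵀ)⁻¹.mulVec p.2))
    (DH : (Fin n → ℝ) × (Fin n → ℝ) →
      ((Fin n → ℝ) × (Fin n → ℝ)) →L[ℝ] ((Fin n → ℝ) × (Fin n → ℝ)))
    (hDH : ∀ p : (Fin n → ℝ) × (Fin n → ℝ), p.1 ∈ U → HasFDerivAt H (DH p) p)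
    (τ : ((Fin n → ℝ) × (Fin n → ℝ)) → ((Fin n → ℝ) × (Fin n → ℝ)) → ℝ)
    (hτ : ∀ v w : (Fin n → ℝ) × (Fin n → ℝ), τ v w = v.1 ⬝ᵥ w.2) :
    ((∀ p : (Fin n → ℝ) × (Fin n → ℝ), p.1 ∈ U →
          ∀ v w, τ (DH p v) (DH p w) = τ v w)
        ↔ (∀ x ∈ U, D2h x = 0))
    ∧ ((∀ p : (Fin n → ℝ) × (Fin n → ℝ), p.1 ∈ U →
          ∀ v w, τ (DH p v) (DH p w) = τ v w)
        ↔ ∃ (A : Matrix (Fin n) (Fin n) ℝ) (b : Fin n → ℝ),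
            ∀ x ∈ U, h x = A.mulVec x + b) := by
  have hDH_fst : ∀ x ∈ U, ∀ η v, (DH (x, η) v).1 = Dh x *ᵥ v.1 := fun x hx η =>
    HasFDerivAt.fst_apply_of_fst_comp_eq (funext fun p => by simp [hHdef]) (hDH (x, η) hx)
      (hh x hx)
  have hDH_snd : ∀ x ∈ U, ∀ η v,
      (DH (x, η) v).2 ᵥ* Dh x + ((Dh x)ᵀ⁻¹ *ᵥ η) ᵥ* D2h x v.1 = v.2 := fun x hx η =>
    cotangentLift_fderiv_snd (Filter.eventually_of_mem (hU.mem_nhds hx) hinv)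
      (fun p => by simp [hHdef]) (hDh x hx) (hDH (x, η) hx)
  have hτ_DH : ∀ x ∈ U, ∀ η v w, τ (DH (x, η) v) (DH (x, η) w) =
      τ v w - ((Dh x)ᵀ⁻¹ *ᵥ η) ⬝ᵥ (D2h x w.1 *ᵥ v.1) := by
    intro x hx η v w
    rw [hτ, hτ, hDH_fst x hx]
    exact mulVec_dotProduct_eq_of_vecMul_add_eq (hDH_snd x hx η w)
  have hpres : (∀ p : (Fin n → ℝ) × (Fin n → ℝ), p.1 ∈ U →
      ∀ v w, τ (DH p v) (DH p w) = τ v w) ↔ ∀ x ∈ U, D2h x = 0 := by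
    refine ⟨fun hp x hx => ?_, fun hD2h ⟨x, η⟩ hx v w => by simp [hτ_DH x hx, hD2h x hx]⟩
    refine ContinuousLinearMap.eq_zero_of_forall_dotProduct_mulVec_apply fun μ c a => ?_
    obtain ⟨η, rfl⟩ := mulVec_inv_transpose_surjective (hinv x hx) μ
    simpa [hτ_DH x hx] using hp (x, η) hx (a, 0) (c, 0)
  exact ⟨hpres,
    hpres.trans (fderiv_fderiv_eq_zero_iff_exists_affine hU hconn.isPreconnected hh hDh)⟩
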